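/- Assume r ≥ 1/2. Then λ = max( min( d/(1+ρ), 1/4, (r−d)/(2r−1+ρ) ), 0 ) is a nonnegative eigenvalue of the four-variable system (S), i.e. there exists y ∈ ℝ^4 such that (λ, y) is a solution of (S). -/

import Mathlib

/-!
Write `S = ∑ aᵢ = b_n + b_m + a_n + a_{n+m}`. After clearing the common denominator `n + m - 1`,
`λ = max (min (S / (n + m)) (min (1 / 4) ((n - S) / (n - m + 2)))) 0`, and `r ≥ 1/2` makes
`n - m + 2` positive. System (S) is invariant under adding a constant to all four unknowns, so
`y_1 = 0` may be assumed. In each of the four regimes `λ = S / (n + m)`, `λ = 1 / 4`,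
`λ = (n - S) / (n - m + 2)` and `λ = 0`, one chooses which term of each minimum is attained,
solves the resulting linear system for `y`, and checks that the other terms are not smaller.
-/

open Finset

/-- The four-variable system (S), with variables `y1 = y_1`, `yn = y_n`,
`yn1 = y_{n+1}`, `ynm = y_{n+m}`. -/
def Ssol (n m : ℕ) (a : ℕ → ℝ) (lam y1 yn yn1 ynm : ℝ) : Prop :=
  yn = min ((1 - (a n + a (n + m))) - 2 * lam + y1 + yn1 - ynm)
      ((∑ i ∈ Finset.Icc 1 (n - 1), a i) - ((n : ℝ) - 1) * lam + y1) ∧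
  ynm = min ((1 - (a n + a (n + m))) - lam + y1 + yn1 - yn)
      ((∑ i ∈ Finset.Icc (n + 1) (n + m - 1), a i) - ((m : ℝ) - 1) * lam + yn1) ∧
  y1 = min (a n - lam + (yn + ynm) / 2)
      ((∑ i ∈ Finset.Icc 1 (n - 1), (1 - a i)) - ((n : ℝ) - 1) * lam + yn) ∧
  yn1 = min (a (n + m) - lam + (yn + ynm) / 2)
      ((∑ i ∈ Finset.Icc (n + 1) (n + m - 1), (1 - a i)) - ((m : ℝ) - 1) * lam + ynm)

/-- The system (S) with `N = n`, `M = m`, `p = a_n`, `q = a_{n+m}`, `Bn = b_n`, `Bm = b_m`,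
and `b̄_n = (N - 1) - Bn`, `b̄_m = (M - 1) - Bm`. -/
def ReducedSsol (N M p q Bn Bm lam y1 yn yn1 ynm : ℝ) : Prop :=
  yn = min ((1 - (p + q)) - 2 * lam + y1 + yn1 - ynm) (Bn - (N - 1) * lam + y1) ∧
  ynm = min ((1 - (p + q)) - lam + y1 + yn1 - yn) (Bm - (M - 1) * lam + yn1) ∧
  y1 = min (p - lam + (yn + ynm) / 2) (((N - 1) - Bn) - (N - 1) * lam + yn) ∧
  yn1 = min (q - lam + (yn + ynm) / 2) (((M - 1) - Bm) - (M - 1) * lam + ynm)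

/-- The eigenvalue of the statement, with `S = ∑ a_i` and the denominators `n + m - 1` of
`d`, `r`, `ρ` cleared. -/
noncomputable def reducedEigenvalue (N M S : ℝ) : ℝ :=
  max (min (S / (N + M)) (min (1 / 4) ((N - S) / (N - M + 2)))) 0

theorem reducedEigenvalue_eq (N M S : ℝ) (hK : N + M - 1 ≠ 0) :
    max (min (S / (N + M - 1) / (1 + 1 / (N + M - 1)))
        (min (1 / 4) ((N / (N + M - 1) - S / (N + M - 1)) /
          (2 * (N / (N + M - 1)) - 1 + 1 / (N + M - 1))))) 0 =
      reducedEigenvalue N M S := by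
  have hD : 1 + 1 / (N + M - 1) = (N + M) / (N + M - 1) := by field_simp; ring
  have hR₁ : N / (N + M - 1) - S / (N + M - 1) = (N - S) / (N + M - 1) := by ring
  have hR₂ : 2 * (N / (N + M - 1)) - 1 + 1 / (N + M - 1) = (N - M + 2) / (N + M - 1) := by
    field_simp; ring
  rw [hD, hR₁, hR₂, div_div_div_cancel_right₀ hK, div_div_div_cancel_right₀ hK,
    reducedEigenvalue]

namespace ReducedSsol

variable {N M p q Bn Bm lam : ℝ}

theorem of_mul_eq_sum (hN : 1 ≤ N) (hM : 1 ≤ M) (hlam : lam ≤ 1 / 4)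
    (hS : (N + M) * lam = Bn + Bm + p + q) :
    ReducedSsol N M p q Bn Bm lam 0 (Bn - (N - 1) * lam) (q - p)
      ((N + 1) * lam - 2 * p - Bn) := by
  have hN' : 0 ≤ (N - 1) * (1 - 2 * lam) := mul_nonneg (by linarith) (by linarith)
  have hM' : 0 ≤ (M - 1) * (1 - 2 * lam) := mul_nonneg (by linarith) (by linarith)
  refine ⟨?_, ?_, ?_, ?_⟩
  · rw [min_eq_right (by linarith)]; ring
  · rw [min_eq_right (by linarith)]; linarith
  · rw [min_eq_left (by linarith)]; ring
  · rw [min_eq_left (by linarith)]; ring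

theorem of_eq_quarter (hBm0 : 0 ≤ Bm) (hBm : Bm ≤ M - 1)
    (hD : (N + M) / 4 ≤ Bn + Bm + p + q) (hR : (N - M + 2) / 4 ≤ N - (Bn + Bm + p + q)) :
    ReducedSsol N M p q Bn Bm (1 / 4) 0 ((M + 1) / 4 - p - q - Bm) (q - p)
      (Bm - (M - 1) / 4 + (q - p)) := by
  refine ⟨?_, ?_, ?_, ?_⟩
  · rw [min_eq_left (by linarith)]; ring
  · rw [min_eq_right (by linarith)]; ring
  · rw [min_eq_left (by linarith)]; ring
  · rw [min_eq_left (by linarith)]; ring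

theorem of_mul_eq_sub_sum (hN : 1 ≤ N) (hM : 1 ≤ M) (hlam0 : 0 ≤ lam) (hlam : lam ≤ 1 / 4)
    (hR : (N - M + 2) * lam = N - (Bn + Bm + p + q)) :
    ReducedSsol N M p q Bn Bm lam 0 ((N - 1) * lam - (N - 1) + Bn)
      (Bm + 2 * q - (M + 1) * lam + ((N - 1) * lam - (N - 1) + Bn))
      (2 * Bm + 2 * q - 2 * M * lam + ((N - 1) * lam - (N - 1) + Bn)) := by
  have hN' : 0 ≤ (N - 1) * (1 - 2 * lam) := mul_nonneg (by linarith) (by linarith)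
  have hM' : 0 ≤ (M - 1) * (1 - 2 * lam) := mul_nonneg (by linarith) (by linarith)
  refine ⟨?_, ?_, ?_, ?_⟩
  · rw [min_eq_left (by linarith)]; linarith
  · rw [min_eq_right (by linarith)]; ring
  · rw [min_eq_right (by linarith)]; ring
  · rw [min_eq_left (by linarith)]; ring

theorem of_le_sum (hN : 1 ≤ N) (hpq : p + q ≤ 1) (hBn : Bn ≤ N - 1) (hBm : Bm ≤ M - 1)
    (hS : N ≤ Bn + Bm + p + q) :
    ReducedSsol N M p q Bn Bm 0 0 (Bn - (N - 1)) (1 - p + q) (N + 1 - 2 * p - Bn) := by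
  refine ⟨?_, ?_, ?_, ?_⟩
  · rw [min_eq_left (by linarith)]; ring
  · rw [min_eq_left (by linarith)]; ring
  · rw [min_eq_right (by linarith)]; ring
  · rw [min_eq_left (by linarith)]; ring

theorem exists_of_reducedEigenvalue (hN : 1 ≤ N) (hM : 1 ≤ M) (hMN : M < N + 2)
    (hp : 0 ≤ p) (hq : 0 ≤ q) (hpq : p + q ≤ 1)
    (hBn0 : 0 ≤ Bn) (hBn : Bn ≤ N - 1) (hBm0 : 0 ≤ Bm) (hBm : Bm ≤ M - 1) :
    ∃ y1 yn yn1 ynm,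
      ReducedSsol N M p q Bn Bm (reducedEigenvalue N M (Bn + Bm + p + q)) y1 yn yn1 ynm := by
  have hNM : 0 < N + M := by linarith
  have hNM' : 0 < N - M + 2 := by linarith
  set S := Bn + Bm + p + q
  set D := S / (N + M) with hD
  set R := (N - S) / (N - M + 2) with hR
  rcases le_total D (min (1 / 4) R) with hDmin | hminD
  · rw [reducedEigenvalue, min_eq_left hDmin, max_eq_left (by positivity)]
    refine ⟨_, _, _, _, of_mul_eq_sum hN hM (hDmin.trans (min_le_left _ _)) ?_⟩
    rw [hD, mul_div_cancel₀ _ hNM.ne']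
  rcases le_total (1 / 4) R with hQR | hRQ
  · rw [reducedEigenvalue, min_eq_right hminD, min_eq_left hQR, max_eq_left (by norm_num)]
    rw [min_eq_left hQR, hD, le_div_iff₀ hNM] at hminD
    rw [hR, le_div_iff₀ hNM'] at hQR
    exact ⟨_, _, _, _, of_eq_quarter hBm0 hBm (by linarith) (by linarith)⟩
  rcases le_total 0 R with hR0 | hR0
  · rw [reducedEigenvalue, min_eq_right hminD, min_eq_right hRQ, max_eq_left hR0]
    refine ⟨_, _, _, _, of_mul_eq_sub_sum hN hM hR0 hRQ ?_⟩
    rw [hR, mul_div_cancel₀ _ hNM'.ne']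
  · rw [reducedEigenvalue, min_eq_right hminD, min_eq_right hRQ, max_eq_right hR0]
    rw [hR, div_le_iff₀ hNM', zero_mul, sub_nonpos] at hR0
    exact ⟨_, _, _, _, of_le_sum hN hpq hBn hBm (by linarith)⟩

end ReducedSsol

section Blocks

variable {n m : ℕ}

theorem sum_Icc_one_add (f : ℕ → ℝ) (hn : 1 ≤ n) (hm : 1 ≤ m) :
    ∑ i ∈ Icc 1 (n + m), f i =
      ∑ i ∈ Icc 1 (n - 1), f i + ∑ i ∈ Icc (n + 1) (n + m - 1), f i + f n + f (n + m) := by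
  obtain ⟨k, rfl⟩ := Nat.exists_eq_add_of_le' hn
  obtain ⟨l, rfl⟩ := Nat.exists_eq_add_of_le' hm
  have hfirst := sum_Icc_succ_top (by omega : 1 ≤ k + 1) f
  have hlast := sum_Icc_succ_top (by omega : 1 ≤ k + 1 + l + 1) f
  have hsplit : ∑ i ∈ Icc 1 (k + 1), f i + ∑ i ∈ Icc (k + 1 + 1) (k + 1 + l), f i =
      ∑ i ∈ Icc 1 (k + 1 + l), f i := by
    simp only [← Ico_add_one_right_eq_Icc]
    exact sum_Ico_consecutive _ (by omega) (by omega)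
  rw [show k + 1 + (l + 1) = k + 1 + l + 1 by omega, Nat.add_sub_cancel, Nat.add_sub_cancel]
  linarith

theorem card_Icc_one_sub_one (hn : 1 ≤ n) : ((Icc 1 (n - 1)).card : ℝ) = n - 1 := by
  rw [Nat.card_Icc, Nat.add_sub_cancel, Nat.cast_sub hn, Nat.cast_one]

theorem card_Icc_add_one_add_sub_one (hm : 1 ≤ m) :
    ((Icc (n + 1) (n + m - 1)).card : ℝ) = m - 1 := by
  rw [Nat.card_Icc, show n + m - 1 + 1 - (n + 1) = m - 1 by omega, Nat.cast_sub hm, Nat.cast_one]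

theorem sum_nonneg_and_le_card {ι : Type*} (s : Finset ι) {f : ι → ℝ}
    (hf : ∀ i ∈ s, 0 ≤ f i ∧ f i ≤ 1) : 0 ≤ ∑ i ∈ s, f i ∧ ∑ i ∈ s, f i ≤ #s := by
  refine ⟨sum_nonneg fun i hi => (hf i hi).1, ?_⟩
  simpa using sum_le_card_nsmul s f 1 fun i hi => (hf i hi).2

theorem ssol_iff_reducedSsol (hn : 1 ≤ n) (hm : 1 ≤ m) (a : ℕ → ℝ) (lam y1 yn yn1 ynm : ℝ) :
    Ssol n m a lam y1 yn yn1 ynm ↔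
      ReducedSsol n m (a n) (a (n + m)) (∑ i ∈ Icc 1 (n - 1), a i)
        (∑ i ∈ Icc (n + 1) (n + m - 1), a i) lam y1 yn yn1 ynm := by
  rw [Ssol, ReducedSsol, sum_sub_distrib, sum_sub_distrib, sum_const, sum_const, nsmul_one,
    nsmul_one, card_Icc_one_sub_one hn, card_Icc_add_one_add_sub_one hm]

end Blocks

theorem stmt11 (n m : ℕ) (hn : 2 ≤ n) (hm : 2 ≤ m) (a : ℕ → ℝ)
    (ha : ∀ i : ℕ, 1 ≤ i → i ≤ n + m → 0 ≤ a i ∧ a i ≤ 1)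
    (hprio : a n + a (n + m) ≤ 1)
    (d r ρ : ℝ) (hd : d = (∑ i ∈ Finset.Icc 1 (n + m), a i) / ((n : ℝ) + (m : ℝ) - 1))
    (hr : r = (n : ℝ) / ((n : ℝ) + (m : ℝ) - 1))
    (hρ : ρ = 1 / ((n : ℝ) + (m : ℝ) - 1))
    (hr2 : 1 / 2 ≤ r)
    (lam : ℝ)
    (hlam : lam = max (min (d / (1 + ρ)) (min (1 / 4) ((r - d) / (2 * r - 1 + ρ)))) 0) :
    0 ≤ lam ∧ ∃ y1 yn yn1 ynm : ℝ, Ssol n m a lam y1 yn yn1 ynm := by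
  have hn1 : 1 ≤ n := by omega
  have hm1 : 1 ≤ m := by omega
  have hN : (1 : ℝ) ≤ n := by exact_mod_cast hn1
  have hM : (1 : ℝ) ≤ m := by exact_mod_cast hm1
  have hK : (0 : ℝ) < n + m - 1 := by linarith
  have hMN : (m : ℝ) < n + 2 := by
    rw [hr, le_div_iff₀ hK] at hr2
    linarith
  obtain ⟨hBn0, hBn⟩ := sum_nonneg_and_le_card (Icc 1 (n - 1)) (f := a) fun i hi =>
    ha i (mem_Icc.1 hi).1 (by have := (mem_Icc.1 hi).2; omega)
  obtain ⟨hBm0, hBm⟩ := sum_nonneg_and_le_card (Icc (n + 1) (n + m - 1)) (f := a) fun i hi =>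
    ha i (by have := (mem_Icc.1 hi).1; omega) (by have := (mem_Icc.1 hi).2; omega)
  rw [card_Icc_one_sub_one hn1] at hBn
  rw [card_Icc_add_one_add_sub_one hm1] at hBm
  rw [hd, hr, hρ, reducedEigenvalue_eq _ _ _ hK.ne', sum_Icc_one_add a hn1 hm1] at hlam
  subst hlam
  refine ⟨le_max_right _ _, ?_⟩
  simp_rw [ssol_iff_reducedSsol hn1 hm1]
  exact ReducedSsol.exists_of_reducedEigenvalue hN hM hMN (ha n hn1 (by omega)).1
    (ha (n + m) (by omega) le_rfl).1 hprio hBn0 hBn hBm0 hBm
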